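/- For every integer $d_B \geq 2$ and every $\varepsilon \in (0, 1 - 1/d_B]$, there exist a finite alphabet $\mathcal{X}$, probability distributions $r, s$ on $\mathcal{X}$, and families of density matrices $\{\rho_B^x\}_x, \{\sigma_B^x\}_x$ on $\mathbb{C}^{d_B}$ such that the classical--quantum states $\rho_{XB} = \sum_x r(x)|x\rangle\langle x| \otimes \rho_B^x$ and $\sigma_{XB} = \sum_x s(x)|x\rangle\langle x| \otimes \sigma_B^x$ satisfy $\tfrac{1}{2}\|\rho_{XB} - \sigma_{XB}\|_1 \leq \varepsilon$ and $|H(B|X)_\rho - H(B|X)_\sigma| = \varepsilon \log_2(d_B - 1) + h_2(\varepsilon)$. -/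

import Mathlib

/-!
One classical symbol suffices. Take `ρ_B = |0⟩⟨0|` and
`σ_B = diag (1 - ε, ε / (d - 1), …, ε / (d - 1))`, i.e. the spectra `saturatingSpectrum d 0` and
`saturatingSpectrum d ε`. Both states are diagonal, so their trace distance is half the `ℓ¹`
distance of the spectra, namely `ε`, while `H(ρ_B) = 0` and
`H(σ_B) = h₂(ε) + ε log₂ (d - 1)`: the mass `ε` is spread uniformly over the other `d - 1` levels.
-/

open scoped BigOperators ComplexOrder

noncomputable def traceNorm {n : Type*} [Fintype n] [DecidableEq n]
    (A : Matrix n n ℂ) : ℝ :=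
  (((Matrix.posSemidef_conjTranspose_mul_self A).1.eigenvectorUnitary.1 *
      Matrix.diagonal (((↑) : ℝ → ℂ) ∘ Real.sqrt ∘ (Matrix.posSemidef_conjTranspose_mul_self A).1.eigenvalues) *
      (star (Matrix.posSemidef_conjTranspose_mul_self A).1.eigenvectorUnitary : Matrix n n ℂ)).trace).re

def IsDensityMatrix {n : Type*} [Fintype n] [DecidableEq n]
    (ρ : Matrix n n ℂ) : Prop :=
  ρ.PosSemidef ∧ ρ.trace = 1

noncomputable def vNEntropy {n : Type*} [Fintype n] [DecidableEq n]
    (ρ : Matrix n n ℂ) : ℝ :=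
  if h : ρ.IsHermitian then -∑ i, h.eigenvalues i * Real.logb 2 (h.eigenvalues i) else 0

noncomputable def binEntropy (ε : ℝ) : ℝ :=
  -ε * Real.logb 2 ε - (1 - ε) * Real.logb 2 (1 - ε)

noncomputable def cqState {𝓧 : Type*} {d : ℕ} [DecidableEq 𝓧] (r : 𝓧 → ℝ)
    (ρ : 𝓧 → Matrix (Fin d) (Fin d) ℂ) :
    Matrix (𝓧 × Fin d) (𝓧 × Fin d) ℂ :=
  Matrix.of fun p q => if p.1 = q.1 then (r p.1 : ℂ) * ρ p.1 p.2 q.2 else 0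

section

open Matrix Polynomial

theorem Fintype.sum_ite_eq_add_card_sub_one_mul {ι : Type*} [Fintype ι] [DecidableEq ι]
    (z : ι) (a b : ℝ) :
    ∑ i, (if i = z then a else b) = a + ((Fintype.card ι : ℝ) - 1) * b := by
  have hsplit : ∀ i, (if i = z then a else b) = (if i = z then a - b else 0) + b := by
    intro i; split_ifs <;> ring
  simp only [hsplit, Finset.sum_add_distrib, Finset.sum_ite_eq', Finset.mem_univ, if_true,
    Finset.sum_const, Finset.card_univ, nsmul_eq_mul]
  ring

theorem Matrix.IsHermitian.sum_eigenvalues_of_eq_diagonal {𝕜 n : Type*} [RCLike 𝕜] [Fintype n]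
    [DecidableEq n] {A : Matrix n n 𝕜} (hA : A.IsHermitian) {w : n → ℝ}
    (hw : A = diagonal fun i => (w i : 𝕜)) (f : ℝ → ℝ) :
    ∑ i, f (hA.eigenvalues i) = ∑ i, f (w i) := by
  have hroots : Finset.univ.val.map (RCLike.ofReal ∘ hA.eigenvalues : n → 𝕜) =
      Finset.univ.val.map (RCLike.ofReal ∘ w) := by
    rw [← hA.roots_charpoly_eq_eigenvalues, hw, charpoly_diagonal, roots_prod]
    · simp
    · simp [Finset.prod_ne_zero_iff, X_sub_C_ne_zero]
  have hmap := congrArg (Multiset.map (RCLike.re : 𝕜 → ℝ)) hroots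
  simp only [Multiset.map_map, Function.comp_def, RCLike.ofReal_re] at hmap
  simpa only [Finset.sum_eq_multiset_sum, Multiset.map_map, Function.comp_def] using
    congrArg (fun m => (m.map f).sum) hmap

theorem traceNorm_diagonal {n : Type*} [Fintype n] [DecidableEq n] (d : n → ℂ) :
    traceNorm (diagonal d) = ∑ i, ‖d i‖ := by
  have hsq : (diagonal d)ᴴ * diagonal d = diagonal fun i => ((‖d i‖ ^ 2 : ℝ) : ℂ) := by
    rw [diagonal_conjTranspose, diagonal_mul_diagonal]
    congr 1; funext i
    simp [Complex.conj_mul']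
  unfold traceNorm
  rw [trace_mul_comm, ← mul_assoc, UnitaryGroup.star_mul_self, one_mul, trace_diagonal]
  simp only [Function.comp_apply, ← Complex.ofReal_sum, Complex.ofReal_re]
  rw [IsHermitian.sum_eigenvalues_of_eq_diagonal _ hsq]
  exact Finset.sum_congr rfl fun i _ => Real.sqrt_sq (norm_nonneg _)

theorem isDensityMatrix_diagonal {n : Type*} [Fintype n] [DecidableEq n] {w : n → ℝ}
    (hw0 : ∀ i, 0 ≤ w i) (hw1 : ∑ i, w i = 1) :
    IsDensityMatrix (diagonal fun i => (w i : ℂ)) :=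
  ⟨PosSemidef.diagonal fun i => Complex.zero_le_real.2 (hw0 i), by
    rw [trace_diagonal, ← Complex.ofReal_sum, hw1, Complex.ofReal_one]⟩

theorem vNEntropy_diagonal {n : Type*} [Fintype n] [DecidableEq n] (w : n → ℝ) :
    vNEntropy (diagonal fun i => (w i : ℂ)) = -∑ i, w i * Real.logb 2 (w i) := by
  have hA : (diagonal fun i => (w i : ℂ)).IsHermitian :=
    isHermitian_diagonal_iff.2 fun i => by simp [IsSelfAdjoint, Complex.conj_ofReal]
  rw [vNEntropy, dif_pos hA, hA.sum_eigenvalues_of_eq_diagonal rfl fun t => t * Real.logb 2 t]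

theorem cqState_diagonal {𝓧 : Type*} {d : ℕ} [DecidableEq 𝓧] (r : 𝓧 → ℝ)
    (w : 𝓧 → Fin d → ℂ) :
    cqState r (fun x => diagonal (w x)) = diagonal fun p => (r p.1 : ℂ) * w p.1 p.2 := by
  ext p q
  simp only [cqState, of_apply, diagonal_apply, Prod.ext_iff]
  split_ifs <;> simp_all

end

section SaturatingSpectrum

variable (d : ℕ) [NeZero d] (ε : ℝ)

noncomputable def saturatingSpectrum : Fin d → ℝ :=
  fun i => if i = 0 then 1 - ε else ε / ((d : ℝ) - 1)

variable {d ε}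

theorem saturatingSpectrum_nonneg (h0 : 0 ≤ ε) (h1 : ε ≤ 1) (i : Fin d) :
    0 ≤ saturatingSpectrum d ε i := by
  have hd : (1 : ℝ) ≤ d := by exact_mod_cast Nat.one_le_iff_ne_zero.2 (NeZero.ne d)
  unfold saturatingSpectrum
  split_ifs
  · linarith
  · exact div_nonneg h0 (by linarith)

theorem sum_saturatingSpectrum (hd : 1 < d) : ∑ i, saturatingSpectrum d ε i = 1 := by
  have hd1 : (d : ℝ) - 1 ≠ 0 := sub_ne_zero.2 (by exact_mod_cast hd.ne')
  simp only [saturatingSpectrum]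
  rw [Fintype.sum_ite_eq_add_card_sub_one_mul, Fintype.card_fin, mul_div_cancel₀ _ hd1]
  ring

theorem sum_abs_sub_saturatingSpectrum (h0 : 0 ≤ ε) (hd : 1 < d) :
    ∑ i, |saturatingSpectrum d 0 i - saturatingSpectrum d ε i| = 2 * ε := by
  have hd1 : (0 : ℝ) < d - 1 := sub_pos.2 (by exact_mod_cast hd)
  have hterm : ∀ i, |saturatingSpectrum d 0 i - saturatingSpectrum d ε i| =
      if i = 0 then ε else ε / ((d : ℝ) - 1) := by
    intro i
    unfold saturatingSpectrum
    split_ifs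
    · rw [sub_zero, sub_sub_cancel, abs_of_nonneg h0]
    · rw [zero_div, zero_sub, abs_neg, abs_of_nonneg (div_nonneg h0 hd1.le)]
  rw [Finset.sum_congr rfl fun i _ => hterm i, Fintype.sum_ite_eq_add_card_sub_one_mul,
    Fintype.card_fin, mul_div_cancel₀ _ hd1.ne']
  ring

theorem neg_sum_mul_logb_saturatingSpectrum (hd : 1 < d) :
    -∑ i, saturatingSpectrum d ε i * Real.logb 2 (saturatingSpectrum d ε i) =
      ε * Real.logb 2 ((d : ℝ) - 1) + binEntropy ε := by
  have hd1 : (d : ℝ) - 1 ≠ 0 := sub_ne_zero.2 (by exact_mod_cast hd.ne')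
  have hmass : ((d : ℝ) - 1) * (ε / ((d : ℝ) - 1) * Real.logb 2 (ε / ((d : ℝ) - 1))) =
      ε * Real.logb 2 ε - ε * Real.logb 2 ((d : ℝ) - 1) := by
    rw [← mul_assoc, mul_div_cancel₀ _ hd1]
    rcases eq_or_ne ε 0 with rfl | hε
    · simp
    · rw [Real.logb_div hε hd1]
      ring
  have hterm : ∀ i, saturatingSpectrum d ε i * Real.logb 2 (saturatingSpectrum d ε i) =
      if i = 0 then (1 - ε) * Real.logb 2 (1 - ε)
      else ε / ((d : ℝ) - 1) * Real.logb 2 (ε / ((d : ℝ) - 1)) := by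
    intro i
    unfold saturatingSpectrum
    split_ifs <;> rfl
  rw [Finset.sum_congr rfl fun i _ => hterm i, Fintype.sum_ite_eq_add_card_sub_one_mul,
    Fintype.card_fin, hmass, binEntropy]
  ring

end SaturatingSpectrum

theorem binEntropy_nonneg {ε : ℝ} (h0 : 0 ≤ ε) (h1 : ε ≤ 1) : 0 ≤ binEntropy ε := by
  have hε := Real.logb_nonpos one_lt_two h0 h1
  have h1ε := Real.logb_nonpos one_lt_two (sub_nonneg.2 h1) (sub_le_self 1 h0)
  rw [binEntropy]
  nlinarith [mul_nonneg h0 (neg_nonneg.2 hε), mul_nonneg (sub_nonneg.2 h1) (neg_nonneg.2 h1ε)]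

/-- Optimality of the uniform continuity bound for conditional entropy of
classical–quantum states: for every dimension and ε there is a saturating pair. -/
theorem cq_conditional_entropy_bound_saturated
    (dB : ℕ) (hdB : 2 ≤ dB) (ε : ℝ) (hε0 : 0 < ε) (hε1 : ε ≤ 1 - 1 / (dB : ℝ)) :
    ∃ (𝓧 : Type) (_ : Fintype 𝓧) (_ : DecidableEq 𝓧)
      (r s : 𝓧 → ℝ) (ρ σ : 𝓧 → Matrix (Fin dB) (Fin dB) ℂ),
      (∀ x, 0 ≤ r x) ∧ (∑ x, r x = 1) ∧
      (∀ x, 0 ≤ s x) ∧ (∑ x, s x = 1) ∧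
      (∀ x, IsDensityMatrix (ρ x)) ∧ (∀ x, IsDensityMatrix (σ x)) ∧
      (1 / 2) * traceNorm (cqState r ρ - cqState s σ) ≤ ε ∧
      |(∑ x, r x * vNEntropy (ρ x)) - ∑ x, s x * vNEntropy (σ x)| =
        ε * Real.logb 2 ((dB : ℝ) - 1) + binEntropy ε := by
  have : NeZero dB := ⟨by omega⟩
  have hd : 1 < dB := hdB
  have hdR : (2 : ℝ) ≤ dB := by exact_mod_cast hdB
  have hε1' : ε ≤ 1 := hε1.trans (sub_le_self 1 (by positivity))
  have hentropy : ∀ δ, vNEntropy (Matrix.diagonal fun i => (saturatingSpectrum dB δ i : ℂ)) =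
      δ * Real.logb 2 ((dB : ℝ) - 1) + binEntropy δ := fun δ => by
    rw [vNEntropy_diagonal, neg_sum_mul_logb_saturatingSpectrum hd]
  refine ⟨Unit, inferInstance, inferInstance, fun _ => 1, fun _ => 1,
    fun _ => Matrix.diagonal fun i => (saturatingSpectrum dB 0 i : ℂ),
    fun _ => Matrix.diagonal fun i => (saturatingSpectrum dB ε i : ℂ),
    fun _ => zero_le_one, by simp, fun _ => zero_le_one, by simp,
    fun _ => isDensityMatrix_diagonal (saturatingSpectrum_nonneg le_rfl zero_le_one)
      (sum_saturatingSpectrum hd),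
    fun _ => isDensityMatrix_diagonal (saturatingSpectrum_nonneg hε0.le hε1')
      (sum_saturatingSpectrum hd), ?_, ?_⟩
  · rw [cqState_diagonal, cqState_diagonal, Matrix.diagonal_sub, traceNorm_diagonal,
      Fintype.sum_prod_type]
    simp [← Complex.ofReal_sub, sum_abs_sub_saturatingSpectrum hε0.le hd]
  · have hpos : 0 ≤ ε * Real.logb 2 ((dB : ℝ) - 1) + binEntropy ε :=
      add_nonneg (mul_nonneg hε0.le (Real.logb_nonneg one_lt_two (by linarith)))
        (binEntropy_nonneg hε0.le hε1')
    have hpure : binEntropy 0 = 0 := by simp [binEntropy]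
    simp only [Finset.univ_unique, Finset.sum_singleton, one_mul, hentropy, zero_mul, hpure,
      zero_add, zero_sub, abs_neg, abs_of_nonneg hpos]
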